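/- In the generalized Petersen graph GP(4k,2) with k ≥ 3, for every i with 0 ≤ i ≤ 4k−1 one has d(v_i, v_{i+2k−1}) = k+2, and this value equals the diameter of GP(4k,2). -/

import Mathlib

/-- A vertex `w` strongly resolves vertices `u` and `v` in graph `G`:
`u` lies on a shortest `v`–`w` path or `v` lies on a shortest `u`–`w` path,
equivalently via distances. -/
def StronglyResolves {V : Type*} (G : SimpleGraph V) (w u v : V) : Prop :=
  G.dist w u = G.dist w v + G.dist v u ∨ G.dist w v = G.dist w u + G.dist u v

/-- `S` is a strong resolving set of `G`. -/
def IsStrongResolvingSet {V : Type*} (G : SimpleGraph V) (S : Set V) : Prop :=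
  ∀ u v : V, u ≠ v → ∃ w ∈ S, StronglyResolves G w u v

/-- The strong metric dimension: minimum cardinality of a strong resolving set. -/
noncomputable def sdim {V : Type*} (G : SimpleGraph V) : ℕ :=
  sInf {m : ℕ | ∃ S : Set V, IsStrongResolvingSet G S ∧ S.ncard = m}

/-- Mutually maximally distant vertices. -/
def MutuallyMaximallyDistant {V : Type*} (G : SimpleGraph V) (u v : V) : Prop :=
  u ≠ v ∧ (∀ w : V, G.Adj u w → G.dist w v ≤ G.dist u v) ∧
    (∀ w : V, G.Adj v w → G.dist u w ≤ G.dist u v)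

/-- The generalized Petersen graph `GP n k`, with outer vertices `Sum.inl i` (the `uᵢ`)
and inner vertices `Sum.inr i` (the `vᵢ`), indices in `ZMod n`. -/
def GP (n k : ℕ) : SimpleGraph (ZMod n ⊕ ZMod n) where
  Adj x y := match x, y with
    | Sum.inl i, Sum.inl j => i ≠ j ∧ (j = i + 1 ∨ i = j + 1)
    | Sum.inl i, Sum.inr j => i = j
    | Sum.inr i, Sum.inl j => i = j
    | Sum.inr i, Sum.inr j => i ≠ j ∧ (j = i + (k : ZMod n) ∨ i = j + (k : ZMod n))
  symm := ⟨by rintro (i|i) (j|j) h <;> simp_all <;> tauto⟩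
  loopless := ⟨by rintro (i|i) h <;> simp_all⟩

/-! The distance between two vertices of `GP n 2`, `n` even, is an explicit function of their
rims and of the distance `m` of their indices around the cycle `ZMod n`. For a fixed source this
function vanishes at the source and changes by at most one along each edge, so it is a lower bound
for the distance; every other vertex has a neighbour where it is smaller, so it is also an upper
bound. For `n = 4k` its maximum is `k + 2`, attained by inner vertices whose indices are
`2k - 1` apart. -/

open SimpleGraph Sum

namespace SimpleGraph

variable {V : Type*} {G : SimpleGraph V} {f : V → ℕ} {u v : V}

theorem Walk.apply_le_add_length (hf : ∀ x y, G.Adj x y → f y ≤ f x + 1) (p : G.Walk u v) :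
    f v ≤ f u + p.length := by
  induction p with
  | nil => simp
  | cons h _ ih =>
    have := hf _ _ h
    rw [Walk.length_cons]
    omega

theorem exists_walk_length_le_of_exists_adj_lt (hf : ∀ y, y ≠ u → ∃ z, G.Adj y z ∧ f z < f y)
    (v : V) : ∃ p : G.Walk u v, p.length ≤ f v := by
  induction hv : f v using Nat.strong_induction_on generalizing v with
  | _ m ih =>
    by_cases h : v = u
    · subst h
      exact ⟨.nil, Nat.zero_le _⟩
    obtain ⟨z, hadj, hlt⟩ := hf v h
    obtain ⟨p, hp⟩ := ih (f z) (hv ▸ hlt) z rfl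
    exact ⟨p.concat hadj.symm, by rw [Walk.length_concat]; omega⟩

theorem dist_eq_of_adj_le_of_exists_adj_lt (h0 : f u = 0)
    (hf : ∀ x y, G.Adj x y → f y ≤ f x + 1) (hdesc : ∀ y, y ≠ u → ∃ z, G.Adj y z ∧ f z < f y)
    (v : V) : G.dist u v = f v := by
  obtain ⟨p, hp⟩ := exists_walk_length_le_of_exists_adj_lt hdesc v
  obtain ⟨q, hq⟩ := p.reachable.exists_walk_length_eq_dist
  have := q.apply_le_add_length hf
  have := dist_le p
  omega

end SimpleGraph

namespace ZMod

variable {n : ℕ} [NeZero n]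

theorem val_add_one_eq_or (a : ZMod n) :
    (a + 1).val = a.val + 1 ∨ (a + 1).val + n = a.val + 1 := by
  have hval : (a + 1).val = (a.val + 1) % n := by
    rw [val_add, val_one_eq_one_mod, Nat.add_mod_mod]
  have := a.val_lt
  rcases Nat.lt_or_ge (a.val + 1) n with h | h
  · exact Or.inl (by rw [hval, Nat.mod_eq_of_lt h])
  · exact Or.inr (by rw [hval, show a.val + 1 = n by omega, Nat.mod_self, zero_add])

theorem natAbs_valMinAbs_add_one_eq_or (hn : Even n) (a : ZMod n) :
    (a + 1).valMinAbs.natAbs = a.valMinAbs.natAbs + 1 ∨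
      (a + 1).valMinAbs.natAbs + 1 = a.valMinAbs.natAbs := by
  simp only [valMinAbs_natAbs_eq_min]
  have := a.val_lt
  have := (a + 1).val_lt
  obtain ⟨m, rfl⟩ := hn
  rcases a.val_add_one_eq_or with h | h <;> omega

theorem natAbs_valMinAbs_add_two_eq_or (hn : Even n) (a : ZMod n) :
    (a + 2).valMinAbs.natAbs = a.valMinAbs.natAbs + 2 ∨
      (a + 2).valMinAbs.natAbs = a.valMinAbs.natAbs ∨
      (a + 2).valMinAbs.natAbs + 2 = a.valMinAbs.natAbs := by
  rw [← one_add_one_eq_two, ← add_assoc]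
  rcases natAbs_valMinAbs_add_one_eq_or hn a with h | h <;>
    rcases natAbs_valMinAbs_add_one_eq_or hn (a + 1) with h' | h' <;> omega

theorem natAbs_valMinAbs_add_one_or_sub_one {a : ZMod n} (h : a.valMinAbs.natAbs ≠ 0) :
    (a + 1).valMinAbs.natAbs + 1 = a.valMinAbs.natAbs ∨
      (a - 1).valMinAbs.natAbs + 1 = a.valMinAbs.natAbs := by
  have h1 := (a - 1).val_add_one_eq_or
  rw [sub_add_cancel] at h1
  have := a.val_lt
  have := (a + 1).val_lt
  have := (a - 1).val_lt
  simp only [valMinAbs_natAbs_eq_min] at *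
  rcases a.val_add_one_eq_or with h2 | h2 <;> omega

theorem natAbs_valMinAbs_add_two_or_sub_two {a : ZMod n} (h : 2 ≤ a.valMinAbs.natAbs) :
    (a + 2).valMinAbs.natAbs + 2 = a.valMinAbs.natAbs ∨
      (a - 2).valMinAbs.natAbs + 2 = a.valMinAbs.natAbs := by
  have h1 := (a - 2).val_add_one_eq_or
  have h2 := (a - 2 + 1).val_add_one_eq_or
  have h3 := a.val_add_one_eq_or
  have h4 := (a + 1).val_add_one_eq_or
  rw [add_assoc, one_add_one_eq_two, sub_add_cancel] at h2
  rw [add_assoc, one_add_one_eq_two] at h4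
  have := a.val_lt
  have := (a + 1).val_lt
  have := (a + 2).val_lt
  have := (a - 2).val_lt
  have := (a - 2 + 1).val_lt
  simp only [valMinAbs_natAbs_eq_min] at *
  omega

end ZMod

namespace GP

variable {n : ℕ}

/-- With `m` the distance of the indices around the cycle, a shortest route takes `m / 2` inner
edges, one outer edge if `m` is odd, and the spokes needed to get on and off the inner rim;
between two outer vertices the outer rim alone, of length `m`, may be shorter. -/
def distFormula : ZMod n ⊕ ZMod n → ZMod n ⊕ ZMod n → ℕ
  | inl i, inl j => let m := (j - i).valMinAbs.natAbs; min m (m / 2 + 2 + m % 2)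
  | inr i, inr j => let m := (j - i).valMinAbs.natAbs; m / 2 + 3 * (m % 2)
  | inl i, inr j | inr i, inl j => let m := (j - i).valMinAbs.natAbs; m / 2 + 1 + m % 2

theorem distFormula_self (x : ZMod n ⊕ ZMod n) : distFormula x x = 0 := by
  rcases x with i | i <;> simp [distFormula]

theorem adj_inl_add_one (hn2 : 2 < n) (j : ZMod n) : (GP n 2).Adj (inl j) (inl (j + 1)) := by
  refine ⟨fun h => ?_, Or.inl rfl⟩
  have := (ZMod.natCast_eq_zero_iff 1 n).1 (by simpa using h)
  exact absurd (Nat.le_of_dvd one_pos this) (by omega)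

theorem adj_inl_sub_one (hn2 : 2 < n) (j : ZMod n) : (GP n 2).Adj (inl j) (inl (j - 1)) := by
  simpa using (adj_inl_add_one hn2 (j - 1)).symm

theorem adj_inr_add_two (hn2 : 2 < n) (j : ZMod n) : (GP n 2).Adj (inr j) (inr (j + 2)) := by
  refine ⟨fun h => ?_, Or.inl (by simp)⟩
  have := (ZMod.natCast_eq_zero_iff 2 n).1 (by simpa using h)
  exact absurd (Nat.le_of_dvd two_pos this) (by omega)

theorem adj_inr_sub_two (hn2 : 2 < n) (j : ZMod n) : (GP n 2).Adj (inr j) (inr (j - 2)) := by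
  simpa using (adj_inr_add_two hn2 (j - 2)).symm

variable [NeZero n]

theorem distFormula_le_of_adj (hn : Even n) (s : ZMod n ⊕ ZMod n) {x y : ZMod n ⊕ ZMod n}
    (h : (GP n 2).Adj x y) : distFormula s y ≤ distFormula s x + 1 := by
  rcases x with i | i <;> rcases y with j | j
  · obtain ⟨-, rfl | rfl⟩ := h
    · rcases s with c | c <;> simp only [distFormula, add_sub_right_comm] <;>
        rcases ZMod.natAbs_valMinAbs_add_one_eq_or hn (i - c) with h | h <;> omega
    · rcases s with c | c <;> simp only [distFormula, add_sub_right_comm] <;>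
        rcases ZMod.natAbs_valMinAbs_add_one_eq_or hn (j - c) with h | h <;> omega
  · obtain rfl : i = j := h
    rcases s with c | c <;> simp only [distFormula] <;> omega
  · obtain rfl : i = j := h
    rcases s with c | c <;> simp only [distFormula] <;> omega
  · obtain ⟨-, rfl | rfl⟩ := h
    · rcases s with c | c <;> simp only [distFormula, Nat.cast_ofNat, add_sub_right_comm] <;>
        rcases ZMod.natAbs_valMinAbs_add_two_eq_or hn (i - c) with h | h | h <;> omega
    · rcases s with c | c <;> simp only [distFormula, Nat.cast_ofNat, add_sub_right_comm] <;>
        rcases ZMod.natAbs_valMinAbs_add_two_eq_or hn (j - c) with h | h | h <;> omega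

theorem exists_adj_distFormula_lt (hn2 : 2 < n) {s y : ZMod n ⊕ ZMod n} (hy : y ≠ s) :
    ∃ z, (GP n 2).Adj y z ∧ distFormula s z < distFormula s y := by
  rcases s with c | c <;> rcases y with j | j
  · have hm : (j - c).valMinAbs.natAbs ≠ 0 := by simpa [sub_eq_zero] using hy
    by_cases h : (j - c).valMinAbs.natAbs % 2 = 0 ∧ 4 ≤ (j - c).valMinAbs.natAbs
    · exact ⟨inr j, rfl, by simp only [distFormula]; omega⟩
    rcases ZMod.natAbs_valMinAbs_add_one_or_sub_one hm with h' | h'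
    · exact ⟨inl (j + 1), adj_inl_add_one hn2 j,
        by simp only [distFormula, add_sub_right_comm]; omega⟩
    · exact ⟨inl (j - 1), adj_inl_sub_one hn2 j, by simp only [distFormula, sub_right_comm]; omega⟩
  · by_cases h : (j - c).valMinAbs.natAbs ≤ 1
    · exact ⟨inl j, rfl, by simp only [distFormula]; omega⟩
    rcases ZMod.natAbs_valMinAbs_add_two_or_sub_two (a := j - c) (by omega) with h' | h'
    · exact ⟨inr (j + 2), adj_inr_add_two hn2 j,
        by simp only [distFormula, add_sub_right_comm]; omega⟩
    · exact ⟨inr (j - 2), adj_inr_sub_two hn2 j, by simp only [distFormula, sub_right_comm]; omega⟩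
  · by_cases h : (j - c).valMinAbs.natAbs % 2 = 0
    · exact ⟨inr j, rfl, by simp only [distFormula]; omega⟩
    rcases ZMod.natAbs_valMinAbs_add_one_or_sub_one (a := j - c) (by omega) with h' | h'
    · exact ⟨inl (j + 1), adj_inl_add_one hn2 j,
        by simp only [distFormula, add_sub_right_comm]; omega⟩
    · exact ⟨inl (j - 1), adj_inl_sub_one hn2 j, by simp only [distFormula, sub_right_comm]; omega⟩
  · have hm : (j - c).valMinAbs.natAbs ≠ 0 := by simpa [sub_eq_zero] using hy
    by_cases h : (j - c).valMinAbs.natAbs % 2 = 1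
    · exact ⟨inl j, rfl, by simp only [distFormula]; omega⟩
    rcases ZMod.natAbs_valMinAbs_add_two_or_sub_two (a := j - c) (by omega) with h' | h'
    · exact ⟨inr (j + 2), adj_inr_add_two hn2 j,
        by simp only [distFormula, add_sub_right_comm]; omega⟩
    · exact ⟨inr (j - 2), adj_inr_sub_two hn2 j, by simp only [distFormula, sub_right_comm]; omega⟩

theorem connected (hn2 : 2 < n) : (GP n 2).Connected :=
  .mk fun _ y =>
    (exists_walk_length_le_of_exists_adj_lt (fun _ hy => exists_adj_distFormula_lt hn2 hy) y).elim
      fun p _ => p.reachable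

theorem dist_eq_distFormula (hn : Even n) (hn2 : 2 < n) (x y : ZMod n ⊕ ZMod n) :
    (GP n 2).dist x y = distFormula x y :=
  dist_eq_of_adj_le_of_exists_adj_lt (distFormula_self x)
    (fun _ _ h => distFormula_le_of_adj hn x h) (fun _ hy => exists_adj_distFormula_lt hn2 hy) y

theorem distFormula_le {k : ℕ} [NeZero (4 * k)] (x y : ZMod (4 * k) ⊕ ZMod (4 * k)) :
    distFormula x y ≤ k + 2 := by
  rcases x with i | i <;> rcases y with j | j <;> simp only [distFormula] <;>
    have := (j - i).natAbs_valMinAbs_le <;> omega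

end GP

/-- In `GP (4k) 2` with `k ≥ 3`: `d(vᵢ, v_{i+2k−1}) = k+2` for `0 ≤ i ≤ 4k−1`, and
this equals the diameter. -/
theorem stmt_8 (k : ℕ) (hk : 3 ≤ k) :
    (∀ i : ℕ, i ≤ 4*k - 1 →
      (GP (4*k) 2).dist (Sum.inr ((i : ℕ) : ZMod (4*k)))
        (Sum.inr ((i + (2*k - 1) : ℕ) : ZMod (4*k))) = k + 2) ∧
    (GP (4*k) 2).diam = k + 2 := by
  have : NeZero (4 * k) := ⟨by omega⟩
  have hn : Even (4 * k) := ⟨2 * k, by ring⟩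
  have hn2 : 2 < 4 * k := by omega
  have hfar (i : ZMod (4 * k)) :
      (GP (4 * k) 2).dist (inr i) (inr (i + (2 * k - 1 : ℕ))) = k + 2 := by
    rw [GP.dist_eq_distFormula hn hn2, GP.distFormula, add_sub_cancel_left,
      ZMod.valMinAbs_natCast_of_le_half (by omega), Int.natAbs_natCast]
    omega
  refine ⟨fun i _ => by rw [Nat.cast_add]; exact hfar i, le_antisymm ?_ ?_⟩
  · obtain ⟨x, y, hxy⟩ := (GP (4 * k) 2).exists_dist_eq_diam
    rw [← hxy, GP.dist_eq_distFormula hn hn2]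
    exact GP.distFormula_le x y
  · rw [← hfar 0]
    exact dist_le_diam (connected_iff_ediam_ne_top.mp (GP.connected hn2))
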